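/- Let K = k[[ℏ]] with k a field of characteristic 0, B a Hopf algebra over K with invertible antipode, and (V, ρ, ρ*) a Drinfeld–Yetter module over B. Then ((id − ι∘ε) ⊗ id)(ρ*(v)) ∈ ℏ·(B ⊗ V) for all v ∈ V if and only if for every n ≥ 1 and every v ∈ V one has (d⁽ⁿ⁾ ⊗ id)(ρ*(v)) ∈ ℏⁿ·(B^{⊗n} ⊗ V); that is, V is admissible (its coaction factors through B′ ⊗ V) if and only if the image of ((id − ι∘ε) ⊗ id) ∘ ρ* is contained in ℏ·(B ⊗ V). -/

import Mathlib

open TensorProduct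

noncomputable section


/-- A Drinfeld–Yetter module over a Hopf algebra `B` whose antipode has inverse `S'`:
a left `B`-module structure `act` on `V` together with a right `B`-comodule structure
`coact : V → B ⊗ V` (in the conventions `((1 2)∘Δ ⊗ id) ∘ ρ* = (id ⊗ ρ*) ∘ ρ*` and
`(ε ⊗ id) ∘ ρ* = id`), satisfying the compatibility
`ρ*(b·v) = Σ b₍₃₎ v₍₋₁₎ S⁻¹(b₍₁₎) ⊗ b₍₂₎·v₍₀₎`, where `Δ⁽³⁾ = (Δ ⊗ id) ∘ Δ` and
`ρ*(v) = Σ v₍₋₁₎ ⊗ v₍₀₎` (stated in Sweedler form, for all finite representations of the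
relevant tensors). -/
structure IsDrinfeldYetter {R : Type} [CommRing R] {B : Type} [Ring B] [HopfAlgebra R B]
    (S' : B →ₗ[R] B) {V : Type} [AddCommGroup V] [Module R V]
    (act : B →ₗ[R] V →ₗ[R] V) (coact : V →ₗ[R] B ⊗[R] V) : Prop where
  act_mul : ∀ (b b' : B) (v : V), act (b * b') v = act b (act b' v)
  act_one : ∀ v : V, act 1 v = v
  coassoc : (TensorProduct.assoc R B B V).toLinearMap ∘ₗ
      TensorProduct.map ((TensorProduct.comm R B B).toLinearMap ∘ₗ
        (Coalgebra.comul : B →ₗ[R] B ⊗[R] B)) LinearMap.id ∘ₗ coact =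
    LinearMap.lTensor B coact ∘ₗ coact
  counit_coact : (TensorProduct.lid R V).toLinearMap ∘ₗ
      TensorProduct.map (Coalgebra.counit : B →ₗ[R] R) LinearMap.id ∘ₗ coact = LinearMap.id
  compat : ∀ (b : B) (v : V)
      (ι₁ : Type) (s₁ : Finset ι₁) (x y : ι₁ → B),
      Coalgebra.comul (R := R) b = ∑ i ∈ s₁, x i ⊗ₜ[R] y i →
      ∀ (ι₂ : Type) (s₂ : ι₁ → Finset ι₂) (x₁ x₂ : ι₁ → ι₂ → B),
      (∀ i ∈ s₁, Coalgebra.comul (R := R) (x i) = ∑ j ∈ s₂ i, x₁ i j ⊗ₜ[R] x₂ i j) →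
      ∀ (ι₃ : Type) (s₃ : Finset ι₃) (w : ι₃ → B) (u : ι₃ → V),
      coact v = ∑ l ∈ s₃, w l ⊗ₜ[R] u l →
      coact (act b v) =
        ∑ i ∈ s₁, ∑ j ∈ s₂ i, ∑ l ∈ s₃,
          (y i * w l * S' (x₁ i j)) ⊗ₜ[R] act (x₂ i j) (u l)

/-- A bundled module over `K`, used to form iterated tensor powers of `B`. -/
structure ModuleBundle (K : Type) [CommRing K] : Type 1 where
  carrier : Type
  [acg : AddCommGroup carrier]
  [mod : Module K carrier]

attribute [instance] ModuleBundle.acg ModuleBundle.mod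

variable (K : Type) [CommRing K] (B : Type) [Ring B] [HopfAlgebra K B]

/-- The iterated (right-nested) tensor power `Tn K B n ≅ B^{⊗(n+1)}`. -/
def Tn : ℕ → ModuleBundle K
  | 0 => ⟨B⟩
  | n + 1 => ⟨B ⊗[K] (Tn n).carrier⟩

/-- The iterated comultiplication `Δ⁽ⁿ⁺¹⁾ : B → B^{⊗(n+1)}`
(`Δ⁽¹⁾ = id`, `Δ⁽ⁿ⁺²⁾ = (id ⊗ Δ⁽ⁿ⁺¹⁾) ∘ Δ`). -/
def DeltaIter : (n : ℕ) → B →ₗ[K] (Tn K B n).carrier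
  | 0 => LinearMap.id
  | n + 1 => LinearMap.lTensor B (DeltaIter n) ∘ₗ (Coalgebra.comul : B →ₗ[K] B ⊗[K] B)

/-- `id − ι ∘ ε : B → B`. -/
def pProj : B →ₗ[K] B :=
  LinearMap.id - Algebra.linearMap K B ∘ₗ (Coalgebra.counit : B →ₗ[K] K)

/-- `(id − ι∘ε)^{⊗(n+1)}` on `B^{⊗(n+1)}`. -/
def pProjIter : (n : ℕ) → (Tn K B n).carrier →ₗ[K] (Tn K B n).carrier
  | 0 => pProj K B
  | n + 1 => TensorProduct.map (pProj K B) (pProjIter n)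

/-- `d⁽ⁿ⁺¹⁾ = (id − ι∘ε)^{⊗(n+1)} ∘ Δ⁽ⁿ⁺¹⁾ : B → B^{⊗(n+1)}`. -/
def dIter (n : ℕ) : B →ₗ[K] (Tn K B n).carrier := pProjIter K B n ∘ₗ DeltaIter K B n

/-!
The converse direction is the case `n = 1`. For the direct one, coassociativity of `ρ*` gives,
up to reordering tensor factors,
`(d⁽ⁿ⁺¹⁾ ⊗ id) ∘ ρ* = (id^{⊗n} ⊗ ((id − ι∘ε) ⊗ id) ∘ ρ*) ∘ (d⁽ⁿ⁾ ⊗ id) ∘ ρ*`,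
so every further tensor factor contributes one more factor `ℏ`.
-/

open LinearMap

theorem exists_lTensor_eq_smul {R M N P : Type*} [CommRing R]
    [AddCommGroup M] [Module R M] [AddCommGroup N] [Module R N] [AddCommGroup P] [Module R P]
    (r : R) (f : M →ₗ[R] N) (hf : ∀ m, ∃ n, f m = r • n) (x : P ⊗[R] M) :
    ∃ y, lTensor P f x = r • y := by
  induction x using TensorProduct.induction_on with
  | zero => exact ⟨0, by simp⟩
  | tmul p m =>
    obtain ⟨n, hn⟩ := hf m
    exact ⟨p ⊗ₜ n, by simp [hn, tmul_smul]⟩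
  | add x x' hx hx' =>
    obtain ⟨y, hy⟩ := hx
    obtain ⟨y', hy'⟩ := hx'
    exact ⟨y + y', by simp [hy, hy', smul_add]⟩

theorem rTensor_map_comp_comm_assoc_symm_lTensor {R M N P T V : Type*} [CommRing R]
    [AddCommGroup M] [Module R M] [AddCommGroup N] [Module R N] [AddCommGroup P] [Module R P]
    [AddCommGroup T] [Module R T] [AddCommGroup V] [Module R V]
    (f : M →ₗ[R] T) (g : N →ₗ[R] P) (h : V →ₗ[R] N ⊗[R] V) :
    rTensor V (map g f) ∘ₗ rTensor V (TensorProduct.comm R M N).toLinearMap ∘ₗ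
        (TensorProduct.assoc R M N V).symm.toLinearMap ∘ₗ lTensor M h =
      rTensor V (TensorProduct.comm R T P).toLinearMap ∘ₗ
        (TensorProduct.assoc R T P V).symm.toLinearMap ∘ₗ lTensor T (rTensor V g ∘ₗ h) ∘ₗ
        rTensor V f := by
  ext m v
  simp only [AlgebraTensorModule.curry_apply, curry_apply, LinearMap.coe_comp,
    LinearEquiv.coe_coe, Function.comp_apply, lTensor_tmul, rTensor_tmul, coe_restrictScalars]
  induction h v using TensorProduct.induction_on with
  | zero => simp
  | tmul n w => simp
  | add x y hx hy => simp_all [tmul_add]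

variable {K B}

theorem dIter_succ (n : ℕ) :
    dIter K B (n + 1) = map (pProj K B) (dIter K B n) ∘ₗ Coalgebra.comul := by
  show map (pProj K B) (pProjIter K B n) ∘ₗ lTensor B (DeltaIter K B n) ∘ₗ Coalgebra.comul = _
  rw [← comp_assoc, map_comp_lTensor]
  rfl

-- Stated on elements: as an equation of linear maps, the right-hand side would be elaborated
-- with the instances of `Tn K B (n + 1)`, which blocks rewriting inside it.
theorem rTensor_dIter_succ_apply {V : Type*} [AddCommGroup V] [Module K V] (n : ℕ)
    (x : B ⊗[K] V) :
    rTensor V (dIter K B (n + 1)) x =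
      rTensor V (map (pProj K B) (dIter K B n)) (rTensor V Coalgebra.comul x) := by
  rw [dIter_succ]
  exact rTensor_comp_apply _ _ _ _

def IsCoassocCoaction {V : Type*} [AddCommGroup V] [Module K V] (coact : V →ₗ[K] B ⊗[K] V) :
    Prop :=
  (TensorProduct.assoc K B B V).toLinearMap ∘ₗ
      map ((TensorProduct.comm K B B).toLinearMap ∘ₗ Coalgebra.comul) LinearMap.id ∘ₗ coact =
    lTensor B coact ∘ₗ coact

section Coaction

variable {V : Type*} [AddCommGroup V] [Module K V] {coact : V →ₗ[K] B ⊗[K] V}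

theorem IsCoassocCoaction.rTensor_comul_comp (hco : IsCoassocCoaction coact) :
    rTensor V Coalgebra.comul ∘ₗ coact =
      rTensor V (TensorProduct.comm K B B).toLinearMap ∘ₗ
        (TensorProduct.assoc K B B V).symm.toLinearMap ∘ₗ lTensor B coact ∘ₗ coact := by
  rw [← hco]
  ext v
  simp only [coe_comp, Function.comp_apply, LinearEquiv.symm_comp_assoc, rTensor_map,
    comm_comp_comm_assoc]
  rfl

theorem IsCoassocCoaction.rTensor_dIter_succ_coact (hco : IsCoassocCoaction coact) (n : ℕ)
    (v : V) :
    rTensor V (dIter K B (n + 1)) (coact v) =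
      rTensor V (TensorProduct.comm K (Tn K B n).carrier B).toLinearMap
        ((TensorProduct.assoc K (Tn K B n).carrier B V).symm
          (lTensor (Tn K B n).carrier (rTensor V (pProj K B) ∘ₗ coact)
            (rTensor V (dIter K B n) (coact v)))) := by
  rw [rTensor_dIter_succ_apply, ← comp_apply (rTensor V Coalgebra.comul),
    hco.rTensor_comul_comp]
  exact congr($(rTensor_map_comp_comm_assoc_symm_lTensor (dIter K B n) (pProj K B) coact) (coact v))

theorem IsCoassocCoaction.exists_rTensor_dIter_eq_pow_smul (hco : IsCoassocCoaction coact)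
    {r : K} (hr : ∀ v, ∃ y, rTensor V (pProj K B) (coact v) = r • y) (n : ℕ) (v : V) :
    ∃ y, rTensor V (dIter K B n) (coact v) = r ^ (n + 1) • y := by
  induction n with
  | zero => rw [zero_add, pow_one]; exact hr v
  | succ n ih =>
    obtain ⟨y, hy⟩ := ih
    obtain ⟨z, hz⟩ := exists_lTensor_eq_smul r (rTensor V (pProj K B) ∘ₗ coact) hr y
    refine ⟨rTensor V (TensorProduct.comm K _ B).toLinearMap
      ((TensorProduct.assoc K _ B V).symm z), ?_⟩
    rw [hco.rTensor_dIter_succ_coact, hy, map_smul, hz]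
    simp only [map_smul, smul_smul, ← pow_succ]
    rfl

end Coaction

theorem statement15_general {k : Type} [Field k]
    {B : Type} [Ring B] [HopfAlgebra (PowerSeries k) B]
    (S' : B →ₗ[PowerSeries k] B)
    {V : Type} [AddCommGroup V] [Module (PowerSeries k) V]
    (act : B →ₗ[PowerSeries k] V →ₗ[PowerSeries k] V)
    (coact : V →ₗ[PowerSeries k] B ⊗[PowerSeries k] V)
    (hDY : IsDrinfeldYetter S' act coact) :
    (∀ v : V, ∃ y : B ⊗[PowerSeries k] V,
        LinearMap.rTensor V (pProj (PowerSeries k) B) (coact v) =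
          (PowerSeries.X : PowerSeries k) • y) ↔
    (∀ (n : ℕ) (v : V), ∃ y : (Tn (PowerSeries k) B n).carrier ⊗[PowerSeries k] V,
        LinearMap.rTensor V (dIter (PowerSeries k) B n) (coact v) =
          (PowerSeries.X : PowerSeries k) ^ (n + 1) • y) := by
  have hco : IsCoassocCoaction coact := hDY.coassoc
  refine ⟨hco.exists_rTensor_dIter_eq_pow_smul, fun h v => ?_⟩
  obtain ⟨y, hy⟩ := h 0 v
  exact ⟨y, by rwa [zero_add, pow_one] at hy⟩

/-- (Admissibility criterion.) Let `K = k[[ℏ]]`, `B` a Hopf algebra over `K`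
with invertible antipode and `(V, ρ, ρ*)` a Drinfeld–Yetter module over `B`. Then
`((id − ι∘ε) ⊗ id)(ρ*(v)) ∈ ℏ·(B ⊗ V)` for all `v` if and only if for every `n ≥ 1` and every
`v` one has `(d⁽ⁿ⁾ ⊗ id)(ρ*(v)) ∈ ℏⁿ·(B^{⊗n} ⊗ V)`; that is, `V` is admissible if and only if
the image of `((id − ι∘ε) ⊗ id) ∘ ρ*` is contained in `ℏ·(B ⊗ V)`. -/
theorem statement15 {k : Type} [Field k] [CharZero k]
    {B : Type} [Ring B] [HopfAlgebra (PowerSeries k) B]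
    (S' : B →ₗ[PowerSeries k] B)
    (hS'₁ : S' ∘ₗ (HopfAlgebra.antipode (PowerSeries k) : B →ₗ[PowerSeries k] B) = LinearMap.id)
    (hS'₂ : (HopfAlgebra.antipode (PowerSeries k) : B →ₗ[PowerSeries k] B) ∘ₗ S' = LinearMap.id)
    {V : Type} [AddCommGroup V] [Module (PowerSeries k) V]
    (act : B →ₗ[PowerSeries k] V →ₗ[PowerSeries k] V)
    (coact : V →ₗ[PowerSeries k] B ⊗[PowerSeries k] V)
    (hDY : IsDrinfeldYetter S' act coact) :
    (∀ v : V, ∃ y : B ⊗[PowerSeries k] V,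
        LinearMap.rTensor V (pProj (PowerSeries k) B) (coact v) =
          (PowerSeries.X : PowerSeries k) • y) ↔
    (∀ (n : ℕ) (v : V), ∃ y : (Tn (PowerSeries k) B n).carrier ⊗[PowerSeries k] V,
        LinearMap.rTensor V (dIter (PowerSeries k) B n) (coact v) =
          (PowerSeries.X : PowerSeries k) ^ (n + 1) • y) :=
  statement15_general S' act coact hDY
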